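/- Let $d \in \{1,3,5,\dots\}$ be odd, $k \in \mathbb{N}$ with $k > d/2$, $b > 0$, and $L := k - (d+1)/2 \in \mathbb{N}_0$. Then for every $x \in \mathbb{R}^d \setminus \{0\}$, $\frac{(4\pi)^{-d/2}}{\Gamma(k)} \int_0^\infty t^{k-d/2-1} e^{-b^2 t} e^{-\|x\|^2/(4t)}\,dt = \frac{(4\pi)^{(1-d)/2}}{\Gamma(k)(2b)^{2L+1}} \sum_{l=0}^L \frac{(2L-l)!}{l!\,(L-l)!} (2b\|x\|)^l e^{-b\|x\|}$. -/

import Mathlib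

/-!
Write `J(ν) = ∫₀^∞ t^ν e^{-b²t} e^{-r²/(4t)} dt`. The integrand vanishes at both ends of `(0, ∞)`,
so integrating its derivative gives the three-term recurrence
`b² J(ν) = ν J(ν - 1) + (r² / 4) J(ν - 2)`. The substitution `t = s²` followed by the
Cauchy–Schlömilch transformation `s ↦ b s - r / (2 s)` gives `J(-1/2) = √π e^{-br} / b`, and the
inversion `t ↦ (r / 2b)² / t` gives `J(-3/2) = (2b / r) J(-1/2)`. From these two values the
recurrence determines `J(n - 1/2)` for every `n`, and the scaled reverse Bessel polynomials obey
the same recurrence. For odd `d` the exponent `k - d/2 - 1` is `L - 1/2`.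
-/

open MeasureTheory Real Set Filter Topology

section CauchySchlomilch

variable {E : Type*} [NormedAddCommGroup E] [NormedSpace ℝ E] {a c : ℝ}

theorem hasDerivAt_mul_sub_div (a c : ℝ) {s : ℝ} (hs : s ≠ 0) :
    HasDerivAt (fun s => a * s - c / s) (a + c / s ^ 2) s :=
  (((hasDerivAt_id s).const_mul a).sub ((hasDerivAt_inv hs).const_mul c)).congr_deriv (by ring)

theorem strictMonoOn_mul_sub_div (ha : 0 < a) (hc : 0 ≤ c) :
    StrictMonoOn (fun s => a * s - c / s) (Ioi 0) := by
  intro s (hs : 0 < s) t (ht : 0 < t) hst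
  have : c / t ≤ c / s := div_le_div_of_nonneg_left hc hs hst.le
  dsimp only
  nlinarith

theorem image_mul_sub_div_Ioi (ha : 0 < a) (hc : 0 < c) :
    (fun s => a * s - c / s) '' Ioi 0 = univ := by
  refine eq_univ_of_forall fun y => ?_
  -- the positive root of `a s ^ 2 - y s - c = 0`
  set w := √(y ^ 2 + 4 * a * c)
  have hw : w ^ 2 = y ^ 2 + 4 * a * c := sq_sqrt (by positivity)
  have hyw : 0 < y + w := by
    have : |y| < w := by
      rw [← sqrt_sq_eq_abs]
      exact sqrt_lt_sqrt (sq_nonneg y) (by linarith [mul_pos ha hc])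
    linarith [neg_abs_le y]
  refine ⟨(y + w) / (2 * a), div_pos hyw (by positivity), ?_⟩
  field_simp
  nlinarith [hw]

theorem integral_mul_sub_div_Ioi (ha : 0 < a) (hc : 0 < c) (g : ℝ → E) :
    ∫ s in Ioi 0, (a + c / s ^ 2) • g (a * s - c / s) = ∫ u, g u := by
  have h := integral_image_eq_integral_abs_deriv_smul measurableSet_Ioi
    (fun s (hs : 0 < s) => (hasDerivAt_mul_sub_div a c hs.ne').hasDerivWithinAt)
    (strictMonoOn_mul_sub_div ha hc.le).injOn g
  rw [image_mul_sub_div_Ioi ha hc, setIntegral_univ] at h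
  rw [h]
  refine setIntegral_congr_fun measurableSet_Ioi fun s (hs : 0 < s) => ?_
  rw [abs_of_pos (by positivity)]

theorem integrableOn_mul_sub_div_Ioi_iff (ha : 0 < a) (hc : 0 < c) (g : ℝ → E) :
    IntegrableOn (fun s => (a + c / s ^ 2) • g (a * s - c / s)) (Ioi 0) ↔ Integrable g := by
  have h := integrableOn_image_iff_integrableOn_abs_deriv_smul measurableSet_Ioi
    (fun s (hs : 0 < s) => (hasDerivAt_mul_sub_div a c hs.ne').hasDerivWithinAt)
    (strictMonoOn_mul_sub_div ha hc.le).injOn g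
  rw [image_mul_sub_div_Ioi ha hc, integrableOn_univ] at h
  rw [h]
  refine integrableOn_congr_fun (fun s (hs : 0 < s) => ?_) measurableSet_Ioi
  rw [abs_of_pos (by positivity)]

theorem integral_div_sq_smul_comp_div_Ioi (hc : 0 < c) (f : ℝ → E) :
    ∫ t in Ioi 0, (c / t ^ 2) • f (c / t) = ∫ t in Ioi 0, f t := by
  have h := integral_comp_rpow_Ioi (fun y => f (c * y)) (p := -1) (by norm_num)
  rw [integral_comp_mul_left_Ioi f 0 hc, mul_zero] at h
  rw [← smul_right_inj (inv_ne_zero hc.ne'), ← h, ← integral_smul]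
  refine setIntegral_congr_fun measurableSet_Ioi fun t (ht : 0 < t) => ?_
  simp only [smul_smul]
  rw [show (-1 : ℝ) - 1 = ((-2 : ℤ) : ℝ) by norm_num, rpow_intCast, rpow_neg_one]
  congr 1
  norm_num
  field_simp

theorem integral_comp_mul_sub_div_Ioi (ha : 0 < a) (hc : 0 < c) {g : ℝ → E} (hg : Integrable g)
    (hg_even : ∀ u, g (-u) = g u) :
    ∫ s in Ioi 0, g (a * s - c / s) = (2 * a)⁻¹ • ∫ u, g u := by
  have hweighted := (integrableOn_mul_sub_div_Ioi_iff ha hc g).2 hg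
  have hint : IntegrableOn (fun s => g (a * s - c / s)) (Ioi 0) := by
    have hbdd : ∀ᵐ s ∂(volume.restrict (Ioi 0)), ‖(a + c / s ^ 2)⁻¹‖ ≤ a⁻¹ := by
      filter_upwards [ae_restrict_mem measurableSet_Ioi] with s (hs : 0 < s)
      rw [norm_inv, Real.norm_of_nonneg (by positivity)]
      exact inv_anti₀ ha (le_add_of_nonneg_right (by positivity))
    refine IntegrableOn.congr_fun (hweighted.bdd_smul a⁻¹ ?_ hbdd) (fun s (hs : 0 < s) => ?_)
      measurableSet_Ioi
    · exact (by fun_prop : Measurable fun s : ℝ => (a + c / s ^ 2)⁻¹).aestronglyMeasurable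
    · rw [Pi.smul_apply', smul_smul, inv_mul_cancel₀ (by positivity), one_smul]
  -- `s ↦ (c / a) / s` preserves `Ioi 0` and reverses the sign of `a * s - c / s`
  have hswap : ∫ s in Ioi 0, (c / s ^ 2) • g (a * s - c / s) =
      a • ∫ s in Ioi 0, g (a * s - c / s) := by
    rw [← integral_div_sq_smul_comp_div_Ioi (div_pos hc ha), ← integral_smul]
    refine setIntegral_congr_fun measurableSet_Ioi fun s (hs : 0 < s) => ?_
    rw [smul_smul, ← hg_even]
    congr 2 <;> field_simp
    ring
  have hsplit : ∀ s, (a + c / s ^ 2) • g (a * s - c / s) =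
      a • g (a * s - c / s) + (c / s ^ 2) • g (a * s - c / s) := fun s => add_smul _ _ _
  have hrest : IntegrableOn (fun s => (c / s ^ 2) • g (a * s - c / s)) (Ioi 0) :=
    (hweighted.sub (hint.smul a)).congr_fun (fun s _ => by simp [hsplit]) measurableSet_Ioi
  have hsum : ∫ u, g u = (2 * a) • ∫ s in Ioi 0, g (a * s - c / s) := by
    rw [← integral_mul_sub_div_Ioi ha hc, integral_congr_ae (ae_of_all _ hsplit),
      integral_add (f := fun s => a • g (a * s - c / s)) (hint.smul a) hrest, integral_smul,
      hswap, two_mul, add_smul]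
  rw [hsum, smul_smul, inv_mul_cancel₀ (by positivity), one_smul]

theorem integral_exp_neg_sq_mul_sub_div_Ioi (ha : 0 < a) (hc : 0 < c) :
    ∫ s in Ioi 0, exp (-(a * s - c / s) ^ 2) = √π / (2 * a) := by
  have hgauss := integral_gaussian 1
  simp only [one_mul, div_one, neg_mul] at hgauss
  rw [integral_comp_mul_sub_div_Ioi (g := fun u => exp (-u ^ 2)) ha hc
    (by simpa using integrable_exp_neg_mul_sq one_pos) (by simp), hgauss, smul_eq_mul]
  field_simp

end CauchySchlomilch

noncomputable section

def maternIntegrand (b r ν t : ℝ) : ℝ := t ^ ν * exp (-(b ^ 2) * t) * exp (-r ^ 2 / (4 * t))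

def maternIntegral (b r ν : ℝ) : ℝ := ∫ t in Ioi 0, maternIntegrand b r ν t

end

namespace maternIntegrand

variable {b r : ℝ}

theorem hasDerivAt (b r ν : ℝ) {t : ℝ} (ht : 0 < t) :
    HasDerivAt (maternIntegrand b r ν)
      (ν * maternIntegrand b r (ν - 1) t - b ^ 2 * maternIntegrand b r ν t
        + r ^ 2 / 4 * maternIntegrand b r (ν - 2) t) t := by
  have hpow := hasDerivAt_rpow_const (p := ν) (Or.inl ht.ne')
  have hexp₁ := ((hasDerivAt_id t).const_mul (-(b ^ 2))).exp
  have hexp₂ := ((hasDerivAt_inv ht.ne').const_mul (-r ^ 2 / 4)).exp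
  refine ((hpow.mul hexp₁).mul (hexp₂.congr_of_eventuallyEq ?_)).congr_deriv ?_
  · filter_upwards with s
    congr 1
    ring
  · have h₁ : t ^ (ν - 1) = t ^ ν * t⁻¹ := by rw [rpow_sub_one ht.ne', div_eq_mul_inv]
    have h₂ : t ^ (ν - 2) = t ^ ν * (t ^ 2)⁻¹ := by
      rw [rpow_sub ht, rpow_two, div_eq_mul_inv]
    have h₃ : -r ^ 2 / 4 * t⁻¹ = -r ^ 2 / (4 * t) := by ring
    simp only [maternIntegrand, h₁, h₂, h₃, id, Pi.mul_apply]
    ring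

theorem tendsto_atTop (hb : b ≠ 0) (r ν : ℝ) :
    Tendsto (maternIntegrand b r ν) atTop (𝓝 0) := by
  have hexp : Tendsto (fun t : ℝ => exp (-r ^ 2 / (4 * t))) atTop (𝓝 1) := by
    rw [← exp_zero]
    refine (continuous_exp.tendsto 0).comp ?_
    have h := tendsto_inv_atTop_zero.const_mul (-r ^ 2 / 4)
    rw [mul_zero] at h
    exact h.congr fun t => by ring
  unfold maternIntegrand
  simpa using (tendsto_rpow_mul_exp_neg_mul_atTop_nhds_zero ν (b ^ 2) (by positivity)).mul hexp

theorem tendsto_nhdsGT_zero (b : ℝ) (hr : r ≠ 0) (ν : ℝ) :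
    Tendsto (maternIntegrand b r ν) (𝓝[>] 0) (𝓝 0) := by
  -- in the variable `u = 1 / t` this is `u ^ (-ν) * exp (-(r ^ 2 / 4) * u) → 0` at infinity
  have hinv := (tendsto_rpow_mul_exp_neg_mul_atTop_nhds_zero (-ν) (r ^ 2 / 4)
    (by positivity)).comp tendsto_inv_nhdsGT_zero
  have hexp : Tendsto (fun t : ℝ => exp (-(b ^ 2) * t)) (𝓝[>] 0) (𝓝 1) := by
    rw [← exp_zero]
    exact ((continuous_exp.comp (continuous_const.mul continuous_id)).tendsto' 0 _
      (by simp)).mono_left nhdsWithin_le_nhds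
  refine ((hinv.mul hexp).congr' ?_).trans (by simp)
  filter_upwards [self_mem_nhdsWithin] with t (ht : 0 < t)
  simp only [Function.comp, maternIntegrand, inv_rpow ht.le, rpow_neg ht.le, inv_inv]
  rw [mul_right_comm]
  congr 2
  field_simp

theorem nonneg (b r ν : ℝ) {t : ℝ} (ht : 0 ≤ t) : 0 ≤ maternIntegrand b r ν t := by
  unfold maternIntegrand; positivity

theorem hasDerivAt_update_zero (b r ν : ℝ) {t : ℝ} (ht : 0 < t) :
    HasDerivAt (Function.update (maternIntegrand b r ν) 0 0)
      (ν * maternIntegrand b r (ν - 1) t - b ^ 2 * maternIntegrand b r ν t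
        + r ^ 2 / 4 * maternIntegrand b r (ν - 2) t) t :=
  (hasDerivAt b r ν ht).congr_of_eventuallyEq <|
    (eventually_ne_nhds ht.ne').mono fun _ hs => Function.update_of_ne hs _ _

theorem continuousOn_update_zero (b : ℝ) (hr : r ≠ 0) (ν : ℝ) :
    ContinuousOn (Function.update (maternIntegrand b r ν) 0 0) (Ici 0) := by
  intro t ht
  rcases (mem_Ici.1 ht).eq_or_lt with rfl | ht
  · rw [continuousWithinAt_update_same, Ici_sdiff_left]
    exact tendsto_nhdsGT_zero b hr ν
  · exact (hasDerivAt_update_zero b r ν ht).continuousAt.continuousWithinAt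

theorem integrableOn_Ioi (hb : b ≠ 0) (hr : r ≠ 0) (ν : ℝ) :
    IntegrableOn (maternIntegrand b r ν) (Ioi 0) := by
  rw [← Ioc_union_Ioi_eq_Ioi zero_le_one]
  refine IntegrableOn.union ?_ ?_
  · have hcont : ContinuousOn (Function.update (maternIntegrand b r ν) 0 0) (Icc 0 1) :=
      (continuousOn_update_zero b hr ν).mono Icc_subset_Ici_self
    exact (hcont.integrableOn_Icc.mono_set Ioc_subset_Icc_self).congr_fun
      (fun t ht => Function.update_of_ne ht.1.ne' _ _) measurableSet_Ioc
  · have hdom := (integrableOn_rpow_mul_exp_neg_mul_rpow (s := |ν|) (p := 1)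
      (by linarith [abs_nonneg ν]) one_pos (by positivity : 0 < b ^ 2)).mono_set
      (Ioi_subset_Ioi zero_le_one)
    have hcont : ContinuousOn (maternIntegrand b r ν) (Ioi 1) := fun t ht =>
      (hasDerivAt b r ν (one_pos.trans ht)).continuousAt.continuousWithinAt
    refine hdom.mono' (hcont.aestronglyMeasurable measurableSet_Ioi) ?_
    filter_upwards [ae_restrict_mem measurableSet_Ioi] with t (ht : 1 < t)
    have hexp : exp (-r ^ 2 / (4 * t)) ≤ 1 :=
      exp_le_one_iff.2 (div_nonpos_of_nonpos_of_nonneg (by nlinarith) (by positivity))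
    rw [norm_of_nonneg (nonneg b r ν (by positivity)), rpow_one, maternIntegrand]
    calc _ ≤ t ^ |ν| * exp (-b ^ 2 * t) * 1 := by
          gcongr
          · exact ht.le
          · exact le_abs_self ν
      _ = _ := mul_one _

end maternIntegrand

namespace maternIntegral

variable {b r : ℝ}

theorem recurrence (hb : b ≠ 0) (hr : r ≠ 0) (ν : ℝ) :
    b ^ 2 * maternIntegral b r ν =
      ν * maternIntegral b r (ν - 1) + r ^ 2 / 4 * maternIntegral b r (ν - 2) := by
  have hint := maternIntegrand.integrableOn_Ioi hb hr
  have hint₁ := (hint (ν - 1)).const_mul ν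
  have hint₂ := (hint ν).const_mul (b ^ 2)
  have hint₃ := (hint (ν - 2)).const_mul (r ^ 2 / 4)
  have hftc := integral_Ioi_of_hasDerivAt_of_tendsto
    ((maternIntegrand.continuousOn_update_zero b hr ν) 0 self_mem_Ici)
    (fun t ht => maternIntegrand.hasDerivAt_update_zero b r ν ht) ((hint₁.sub hint₂).add hint₃)
    ((maternIntegrand.tendsto_atTop hb r ν).congr' <| (eventually_gt_atTop 0).mono
      fun _ ht => (Function.update_of_ne ht.ne' _ _).symm)
  rw [Function.update_self, sub_zero,
    integral_add
      (f := fun t => ν * maternIntegrand b r (ν - 1) t - b ^ 2 * maternIntegrand b r ν t)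
      (hint₁.sub hint₂) hint₃,
    integral_sub hint₁ hint₂, integral_const_mul, integral_const_mul, integral_const_mul] at hftc
  unfold maternIntegral
  linarith

theorem eq_rpow_mul_neg_sub_two (hb : 0 < b) (hr : 0 < r) (ν : ℝ) :
    maternIntegral b r ν = (r / (2 * b)) ^ (2 * ν + 2) * maternIntegral b r (-ν - 2) := by
  set q := r / (2 * b) with hq_def
  have hq : 0 < q := by positivity
  unfold maternIntegral
  rw [← integral_div_sq_smul_comp_div_Ioi (pow_pos hq 2), ← integral_const_mul]
  refine setIntegral_congr_fun measurableSet_Ioi fun t (ht : 0 < t) => ?_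
  have hpow : q ^ 2 / t ^ 2 * (q ^ 2 / t) ^ ν = q ^ (2 * ν + 2) * t ^ (-ν - 2) := by
    rw [div_rpow (by positivity) ht.le, rpow_add hq, rpow_mul hq.le, rpow_sub ht, rpow_neg ht.le,
      rpow_two, rpow_two, ← rpow_natCast, Nat.cast_ofNat]
    field_simp
  have hexp₁ : -b ^ 2 * (q ^ 2 / t) = -r ^ 2 / (4 * t) := by rw [hq_def]; field_simp; ring
  have hexp₂ : -r ^ 2 / (4 * (q ^ 2 / t)) = -b ^ 2 * t := by rw [hq_def]; field_simp; ring
  simp only [maternIntegrand, smul_eq_mul, hexp₁, hexp₂]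
  linear_combination (exp (-b ^ 2 * t) * exp (-r ^ 2 / (4 * t))) * hpow

theorem neg_half (hb : 0 < b) (hr : 0 < r) :
    maternIntegral b r (-1 / 2) = √π / b * exp (-(b * r)) := by
  unfold maternIntegral
  rw [← integral_comp_rpow_Ioi_of_pos (p := 2) two_pos]
  calc _ = ∫ s in Ioi 0, 2 * exp (-(b * r)) * exp (-(b * s - r / 2 / s) ^ 2) := by
        refine setIntegral_congr_fun measurableSet_Ioi fun s (hs : 0 < s) => ?_
        have hpow : (s ^ (2 : ℝ)) ^ (-1 / 2 : ℝ) = s⁻¹ := by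
          rw [← rpow_mul hs.le, ← rpow_neg_one]; norm_num
        have hexp : exp (-b ^ 2 * s ^ 2) * exp (-r ^ 2 / (4 * s ^ 2)) =
            exp (-(b * r)) * exp (-(b * s - r / 2 / s) ^ 2) := by
          rw [← exp_add, ← exp_add]
          congr 1
          field_simp
          ring
        rw [smul_eq_mul, maternIntegrand, hpow, rpow_two, show (2 : ℝ) - 1 = 1 by norm_num,
          rpow_one, mul_assoc 2 s, mul_assoc s⁻¹, mul_inv_cancel_left₀ hs.ne', hexp, mul_assoc]
    _ = √π / b * exp (-(b * r)) := by
        rw [integral_const_mul, integral_exp_neg_sq_mul_sub_div_Ioi hb (half_pos hr)]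
        field_simp

theorem neg_three_halves (hb : 0 < b) (hr : 0 < r) :
    maternIntegral b r (-3 / 2) = 2 * √π / r * exp (-(b * r)) := by
  rw [eq_rpow_mul_neg_sub_two hb hr, show 2 * (-3 / 2 : ℝ) + 2 = -1 by norm_num,
    show -(-3 / 2 : ℝ) - 2 = -1 / 2 by norm_num, neg_half hb hr, rpow_neg_one, inv_div]
  field_simp

end maternIntegral

noncomputable section

def reverseBesselCoeff (n l : ℕ) : ℝ :=
  ((2 * n - l).factorial : ℝ) / ((l.factorial : ℝ) * ((n - l).factorial : ℝ))

/-- `reverseBesselSum n z = 2 ^ n * θₙ (z / 2)`, where `θₙ` is the reverse Bessel polynomial. -/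
def reverseBesselSum (n : ℕ) (z : ℝ) : ℝ :=
  ∑ l ∈ Finset.range (n + 1), reverseBesselCoeff n l * z ^ l

end

namespace reverseBesselCoeff

theorem self (n : ℕ) : reverseBesselCoeff n n = 1 := by
  simp [reverseBesselCoeff, two_mul, Nat.factorial_ne_zero]

theorem one_zero : reverseBesselCoeff 1 0 = 2 := by
  norm_num [reverseBesselCoeff]

theorem add_two_zero (n : ℕ) :
    reverseBesselCoeff (n + 2) 0 = 2 * (2 * n + 3) * reverseBesselCoeff (n + 1) 0 := by
  simp only [reverseBesselCoeff, Nat.sub_zero, Nat.factorial_zero, Nat.cast_one, one_mul]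
  rw [show 2 * (n + 2) = 2 * n + 2 + 1 + 1 by ring, show 2 * (n + 1) = 2 * n + 1 + 1 by ring,
    Nat.factorial_succ (2 * n + 2 + 1), Nat.factorial_succ (2 * n + 2), Nat.factorial_succ (n + 1)]
  push_cast
  field_simp
  ring

theorem add_two_one (n : ℕ) :
    reverseBesselCoeff (n + 2) 1 = 2 * (2 * n + 3) * reverseBesselCoeff (n + 1) 1 := by
  simp only [reverseBesselCoeff, Nat.factorial_one, Nat.cast_one, one_mul]
  rw [show 2 * (n + 2) - 1 = 2 * n + 1 + 1 + 1 by omega,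
    show 2 * (n + 1) - 1 = 2 * n + 1 by omega, show n + 2 - 1 = n + 1 by omega,
    show n + 1 - 1 = n by omega,
    Nat.factorial_succ (2 * n + 1 + 1), Nat.factorial_succ (2 * n + 1), Nat.factorial_succ n]
  push_cast
  field_simp
  ring

theorem add_two_add_two {n l : ℕ} (hl : l < n) :
    reverseBesselCoeff (n + 2) (l + 2) =
      2 * (2 * n + 3) * reverseBesselCoeff (n + 1) (l + 2) + reverseBesselCoeff n l := by
  obtain ⟨j, rfl⟩ : ∃ j, n = l + j + 1 := ⟨n - l - 1, by omega⟩
  simp only [reverseBesselCoeff]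
  rw [show 2 * (l + j + 1 + 2) - (l + 2) = l + 2 * j + 2 + 1 + 1 by omega,
    show 2 * (l + j + 1 + 1) - (l + 2) = l + 2 * j + 2 by omega,
    show 2 * (l + j + 1) - l = l + 2 * j + 2 by omega,
    show l + j + 1 + 2 - (l + 2) = j + 1 by omega,
    show l + j + 1 + 1 - (l + 2) = j by omega,
    show l + j + 1 - l = j + 1 by omega,
    Nat.factorial_succ (l + 2 * j + 2 + 1), Nat.factorial_succ (l + 2 * j + 2),
    Nat.factorial_succ j, Nat.factorial_succ (l + 1), Nat.factorial_succ l]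
  push_cast
  field_simp
  ring

end reverseBesselCoeff

theorem reverseBesselSum_add_two (n : ℕ) (z : ℝ) :
    reverseBesselSum (n + 2) z =
      2 * (2 * n + 3) * reverseBesselSum (n + 1) z + z ^ 2 * reverseBesselSum n z := by
  have hterm : ∀ l ∈ Finset.range n,
      reverseBesselCoeff (n + 2) (l + 1 + 1) * z ^ (l + 1 + 1) =
        2 * (2 * n + 3) * (reverseBesselCoeff (n + 1) (l + 1 + 1) * z ^ (l + 1 + 1)) +
          z ^ 2 * (reverseBesselCoeff n l * z ^ l) := fun l hl => by
    rw [reverseBesselCoeff.add_two_add_two (Finset.mem_range.1 hl)]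
    ring
  unfold reverseBesselSum
  rw [Finset.sum_range_succ' _ (n + 2), Finset.sum_range_succ' _ (n + 1),
    Finset.sum_range_succ _ n, Finset.sum_range_succ' _ (n + 1), Finset.sum_range_succ' _ n,
    Finset.mul_sum, Finset.sum_range_succ _ n, Finset.sum_congr rfl hterm,
    Finset.sum_add_distrib, ← Finset.mul_sum, reverseBesselCoeff.add_two_zero,
    reverseBesselCoeff.add_two_one, reverseBesselCoeff.self, reverseBesselCoeff.self]
  ring

theorem maternIntegral_nat_sub_half {b r : ℝ} (hb : 0 < b) (hr : 0 < r) (n : ℕ) :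
    maternIntegral b r (n - 1 / 2) =
      2 * √π / (2 * b) ^ (2 * n + 1) * exp (-(b * r)) * reverseBesselSum n (2 * b * r) := by
  have hb2 : b ^ 2 ≠ 0 := by positivity
  induction n using Nat.twoStepInduction with
  | zero =>
    rw [show ((0 : ℕ) : ℝ) - 1 / 2 = -1 / 2 by norm_num, maternIntegral.neg_half hb hr,
      reverseBesselSum, Finset.sum_range_one, reverseBesselCoeff.self]
    field_simp
    ring
  | one =>
    have h := maternIntegral.recurrence hb.ne' hr.ne' (1 / 2)
    rw [show (1 / 2 : ℝ) - 1 = -1 / 2 by norm_num, show (1 / 2 : ℝ) - 2 = -3 / 2 by norm_num,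
      maternIntegral.neg_half hb hr, maternIntegral.neg_three_halves hb hr] at h
    rw [Nat.cast_one, show (1 : ℝ) - 1 / 2 = 1 / 2 by norm_num, ← mul_right_inj' hb2, h,
      reverseBesselSum, Finset.sum_range_succ, Finset.sum_range_one, reverseBesselCoeff.one_zero,
      reverseBesselCoeff.self]
    field_simp
    ring
  | more n ih₀ ih₁ =>
    have h := maternIntegral.recurrence hb.ne' hr.ne' ((n + 2 : ℕ) - 1 / 2)
    rw [show ((n + 2 : ℕ) : ℝ) - 1 / 2 - 1 = (n + 1 : ℕ) - 1 / 2 by push_cast; ring,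
      show ((n + 2 : ℕ) : ℝ) - 1 / 2 - 2 = n - 1 / 2 by push_cast; ring, ih₀, ih₁] at h
    rw [← mul_right_inj' hb2, h, reverseBesselSum_add_two]
    push_cast
    field_simp
    ring

/-- closed form of the Matérn kernel in odd space dimensions: for odd `d`,
`k > d/2`, `b > 0`, `L = k - (d+1)/2` and `x ≠ 0`,
`(4π)^{-d/2}/Γ(k) ∫_0^∞ t^{k-d/2-1} e^{-b²t} e^{-‖x‖²/(4t)} dt
  = (4π)^{(1-d)/2}/(Γ(k)(2b)^{2L+1}) ∑_{l=0}^L (2L-l)!/(l!(L-l)!) (2b‖x‖)^l e^{-b‖x‖}`. -/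
theorem stmt_15 (d k : ℕ) (hd : Odd d) (hk : (d : ℝ) < 2 * k) (b : ℝ) (hb : 0 < b)
    (L : ℕ) (hL : L = k - (d + 1) / 2) (x : EuclideanSpace ℝ (Fin d)) (hx : x ≠ 0) :
    (4 * π) ^ (-(d : ℝ) / 2) / Real.Gamma k *
        ∫ t in Set.Ioi (0 : ℝ),
          t ^ ((k : ℝ) - (d : ℝ) / 2 - 1) * Real.exp (-(b ^ 2) * t) *
            Real.exp (-‖x‖ ^ 2 / (4 * t)) =
      (4 * π) ^ ((1 - (d : ℝ)) / 2) / (Real.Gamma k * (2 * b) ^ (2 * L + 1)) *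
        ∑ l ∈ Finset.range (L + 1),
          ((2 * L - l).factorial : ℝ) / ((l.factorial : ℝ) * ((L - l).factorial : ℝ)) *
            (2 * b * ‖x‖) ^ l * Real.exp (-(b * ‖x‖)) := by
  obtain ⟨m, rfl⟩ := hd
  have hkL : k = L + m + 1 := by
    have : 2 * m + 1 < 2 * k := by exact_mod_cast hk
    omega
  have hν : (k : ℝ) - ((2 * m + 1 : ℕ) : ℝ) / 2 - 1 = L - 1 / 2 := by
    rw [hkL]; push_cast; ring
  have hcoef : (4 * π) ^ ((1 - ((2 * m + 1 : ℕ) : ℝ)) / 2) =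
      (4 * π) ^ (-((2 * m + 1 : ℕ) : ℝ) / 2) * (2 * √π) := by
    rw [show (1 - ((2 * m + 1 : ℕ) : ℝ)) / 2 = -((2 * m + 1 : ℕ) : ℝ) / 2 + 1 / 2 by ring,
      rpow_add (by positivity), ← sqrt_eq_rpow, sqrt_mul' _ pi_pos.le,
      show (4 : ℝ) = 2 ^ 2 by norm_num, sqrt_sq zero_le_two]
  change _ * maternIntegral b ‖x‖ _ = _
  rw [hν, maternIntegral_nat_sub_half hb (norm_pos_iff.2 hx), hcoef, ← Finset.sum_mul]
  change _ = _ * (reverseBesselSum L _ * _)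
  ring
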